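/- Let C be a binary linear code in 𝔽₂ⁿ with n ≥ 2 and minimum distance at least 7. Then for every vertex x+C of the distance-2 graph of Γ(C), the subgraph induced on its neighborhood is isomorphic to the triangular graph Tₙ, via the map sending the 2-subset {i,j} to x+e_{i,j}+C. -/

import Mathlib

/-!
Since every nonzero codeword of `C` has weight at least 7, two vectors whose weights add up to
less than 7 lie in the same coset only if they are equal. Hence a vector `v` with `2 wt v < 7`
is the unique lightest vector of `v + C`, and the distance from `a` to `a + v + C` in `Γ(C)` is
`wt v`. So the distance-2 neighbours of `x + C` are the cosets `x + e_s + C` for the 2-subsets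
`s`, all distinct. Two of them, `x + e_s + C` and `x + e_t + C`, are at distance 2 iff
`e_s + v + C = e_t + C` for some `v` of weight 2; as `wt (e_s + v) + wt e_t ≤ 6` this forces
`v = e_s + e_t`, i.e. `|s ∆ t| = 2`, i.e. `|s ∩ t| = 1`.
-/

/-- The standard basis vector `e_i` of `𝔽₂ⁿ`. -/
def stdBasis (n : ℕ) (i : Fin n) : Fin n → ZMod 2 :=
  fun k => if k = i then 1 else 0

lemma stdBasis_add_self (n : ℕ) (i : Fin n) : stdBasis n i + stdBasis n i = 0 := by
  funext k; exact CharTwo.add_self_eq_zero _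

/-- The coset graph `Γ(C)` of a binary linear code `C ≤ 𝔽₂ⁿ`: vertices are the
cosets of `C`, with `x + C` adjacent to `x + e_i + C` (when distinct). -/
def cosetGraph {n : ℕ} (C : Submodule (ZMod 2) (Fin n → ZMod 2)) :
    SimpleGraph ((Fin n → ZMod 2) ⧸ C) where
  Adj a b := a ≠ b ∧ ∃ i : Fin n, b = a + Submodule.Quotient.mk (stdBasis n i)
  symm := ⟨by
    rintro a b ⟨hne, i, rfl⟩
    refine ⟨hne.symm, i, ?_⟩
    rw [add_assoc, ← Submodule.Quotient.mk_add, stdBasis_add_self]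
    simp⟩
  loopless := ⟨fun a h => h.1 rfl⟩

/-- `C` has minimum distance at least `d`: every nonzero codeword has
Hamming weight at least `d`. -/
def MinDistAtLeast {n : ℕ} (C : Submodule (ZMod 2) (Fin n → ZMod 2)) (d : ℕ) : Prop :=
  ∀ c ∈ C, c ≠ 0 → d ≤ hammingNorm c

/-- The distance-2 graph of a graph `G`. -/
def dist2 {V : Type*} (G : SimpleGraph V) : SimpleGraph V where
  Adj u v := G.dist u v = 2
  symm := ⟨fun u v h => by rwa [SimpleGraph.dist_comm]⟩
  loopless := ⟨fun u h => by simp only [SimpleGraph.dist_self] at h; omega⟩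

/-- The triangular graph `Tₙ`: vertices are the 2-subsets of `{1,…,n}`, two of
them adjacent iff they intersect in exactly one point. -/
def triangularGraph (n : ℕ) : SimpleGraph {s : Finset (Fin n) // s.card = 2} where
  Adj s t := (s.1 ∩ t.1).card = 1
  symm := ⟨fun s t h => by rwa [Finset.inter_comm]⟩
  loopless := ⟨fun s h => by
    rw [Finset.inter_self, s.2] at h; omega⟩


open SimpleGraph Finset

open scoped symmDiff

theorem hammingNorm_add_le {ι : Type*} [Fintype ι] [DecidableEq ι] {β : ι → Type*}
    [∀ i, AddZeroClass (β i)] [∀ i, DecidableEq (β i)] (x y : ∀ i, β i) :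
    hammingNorm (x + y) ≤ hammingNorm x + hammingNorm y := by
  refine (card_le_card fun i hi => ?_).trans (card_union_le _ _)
  simp only [mem_filter, mem_univ, true_and, mem_union, Pi.add_apply] at hi ⊢
  by_contra! h
  simp [h.1, h.2] at hi

theorem hammingDist_le_hammingNorm_add {ι : Type*} [Fintype ι] {β : ι → Type*}
    [∀ i, Zero (β i)] [∀ i, DecidableEq (β i)] (x y : ∀ i, β i) :
    hammingDist x y ≤ hammingNorm x + hammingNorm y := by
  simpa [hammingDist_zero_right, hammingDist_zero_left] using hammingDist_triangle x 0 y

theorem Finset.card_symmDiff_add_two_mul_card_inter {α : Type*} [DecidableEq α]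
    (s t : Finset α) :
    #(s ∆ t) + 2 * #(s ∩ t) = #s + #t := by
  have hs := card_sdiff_add_card_inter s t
  have ht := card_sdiff_add_card_inter t s
  rw [inter_comm] at ht
  rw [symmDiff_def, sup_eq_union, card_union_of_disjoint disjoint_sdiff_sdiff]
  omega

section indicatorVec

variable {n : ℕ}

def indicatorVec (s : Finset (Fin n)) : Fin n → ZMod 2 := fun k => if k ∈ s then 1 else 0

@[simp]
theorem indicatorVec_empty : indicatorVec (∅ : Finset (Fin n)) = 0 := by
  funext k; simp [indicatorVec]

theorem hammingDist_indicatorVec (s t : Finset (Fin n)) :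
    hammingDist (indicatorVec s) (indicatorVec t) = #(s ∆ t) := by
  unfold hammingDist indicatorVec
  congr 1
  ext k
  by_cases hs : k ∈ s <;> by_cases ht : k ∈ t <;> simp [hs, ht, mem_symmDiff]

theorem hammingNorm_indicatorVec (s : Finset (Fin n)) : hammingNorm (indicatorVec s) = #s := by
  have := hammingDist_indicatorVec s ∅
  rwa [indicatorVec_empty, hammingDist_zero_right, ← bot_eq_empty, symmDiff_bot] at this

theorem indicatorVec_injective : Function.Injective (indicatorVec (n := n)) := by
  intro s t h
  rwa [← hammingDist_eq_zero, hammingDist_indicatorVec, card_eq_zero, symmDiff_eq_empty] at h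

theorem indicatorVec_filter_ne_zero (v : Fin n → ZMod 2) : indicatorVec {k | v k ≠ 0} = v := by
  funext k
  have : ∀ a : ZMod 2, a = 0 ∨ a = 1 := by decide
  rcases this (v k) with h | h <;> simp [indicatorVec, h]

theorem indicatorVec_insert {i : Fin n} {s : Finset (Fin n)} (hi : i ∉ s) :
    indicatorVec (insert i s) = indicatorVec s + stdBasis n i := by
  funext k
  by_cases hk : k = i
  · subst hk; simp [indicatorVec, stdBasis, hi]
  · simp [indicatorVec, stdBasis, hk]

theorem triangularGraph_adj_iff {s t : {s : Finset (Fin n) // #s = 2}} :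
    (triangularGraph n).Adj s t ↔ hammingDist (indicatorVec s.1) (indicatorVec t.1) = 2 := by
  have := card_symmDiff_add_two_mul_card_inter s.1 t.1
  rw [s.2, t.2] at this
  rw [hammingDist_indicatorVec]
  change #(s.1 ∩ t.1) = 1 ↔ _
  omega

end indicatorVec

section cosetGraph

variable {n : ℕ} {C : Submodule (ZMod 2) (Fin n → ZMod 2)}

local notation "mk" => Submodule.Quotient.mk (p := C)

theorem hammingNorm_stdBasis (i : Fin n) : hammingNorm (stdBasis n i) = 1 := by
  have : stdBasis n i = indicatorVec {i} := by funext k; simp [stdBasis, indicatorVec]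
  rw [this, hammingNorm_indicatorVec, card_singleton]

theorem cosetGraph_adj_add_mk_stdBasis {a : (Fin n → ZMod 2) ⧸ C} {i : Fin n}
    (h : a ≠ a + mk (stdBasis n i)) : (cosetGraph C).Adj a (a + mk (stdBasis n i)) :=
  ⟨h, i, rfl⟩

theorem cosetGraph_exists_walk_add_mk (a : (Fin n → ZMod 2) ⧸ C) (v : Fin n → ZMod 2) :
    ∃ p : (cosetGraph C).Walk a (a + mk v), p.length ≤ hammingNorm v := by
  suffices ∀ s, ∃ p : (cosetGraph C).Walk a (a + mk (indicatorVec s)), p.length ≤ #s by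
    have h := this {k | v k ≠ 0}
    rwa [indicatorVec_filter_ne_zero] at h
  intro s
  induction s using Finset.induction_on with
  | empty => exact ⟨Walk.nil.copy rfl (by simp), by simp⟩
  | @insert i s hi ih =>
    obtain ⟨p, hp⟩ := ih
    rw [indicatorVec_insert hi, Submodule.Quotient.mk_add, ← add_assoc, card_insert_of_notMem hi]
    by_cases h : a + mk (indicatorVec s) = a + mk (indicatorVec s) + mk (stdBasis n i)
    · exact ⟨p.copy rfl h, by simp; omega⟩
    · exact ⟨p.concat (cosetGraph_adj_add_mk_stdBasis h), by simp; omega⟩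

theorem cosetGraph_exists_eq_add_mk_of_walk {a b : (Fin n → ZMod 2) ⧸ C}
    (p : (cosetGraph C).Walk a b) :
    ∃ v : Fin n → ZMod 2, b = a + mk v ∧ hammingNorm v ≤ p.length := by
  induction p with
  | nil => exact ⟨0, by simp, by simp⟩
  | cons h p ih =>
    obtain ⟨i, rfl⟩ := h.2
    obtain ⟨v, rfl, hv⟩ := ih
    refine ⟨stdBasis n i + v, by rw [Submodule.Quotient.mk_add, add_assoc], ?_⟩
    have := hammingNorm_add_le (stdBasis n i) v
    rw [hammingNorm_stdBasis] at this
    simp only [Walk.length_cons]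
    omega

theorem MinDistAtLeast.eq_of_mk_eq {d : ℕ} (hd : MinDistAtLeast C d) {u w : Fin n → ZMod 2}
    (h : mk u = mk w) (hlt : hammingDist u w < d) : u = w := by
  by_contra hne
  have := hd _ ((Submodule.Quotient.eq' C).mp h) (by rwa [Ne, neg_add_eq_zero])
  rw [← hammingDist_eq_hammingNorm] at this
  omega

theorem cosetGraph_dist_add_mk {d : ℕ} (hd : MinDistAtLeast C d) (a : (Fin n → ZMod 2) ⧸ C)
    {v : Fin n → ZMod 2} (hv : 2 * hammingNorm v < d) :
    (cosetGraph C).dist a (a + mk v) = hammingNorm v := by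
  obtain ⟨p, hp⟩ := cosetGraph_exists_walk_add_mk a v
  obtain ⟨q, hq⟩ := p.reachable.exists_walk_length_eq_dist
  obtain ⟨w, hw, hwq⟩ := cosetGraph_exists_eq_add_mk_of_walk q
  have hpq := dist_le p
  obtain rfl : v = w := hd.eq_of_mk_eq (add_left_cancel hw) <| by
    have := hammingDist_le_hammingNorm_add v w
    omega
  omega

theorem dist2_cosetGraph_adj_iff {d : ℕ} (hd : MinDistAtLeast C d) (h5 : 5 ≤ d)
    {a b : (Fin n → ZMod 2) ⧸ C} :
    (dist2 (cosetGraph C)).Adj a b ↔ ∃ v, hammingNorm v = 2 ∧ b = a + mk v := by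
  constructor
  · intro h
    change (cosetGraph C).dist a b = 2 at h
    have hab : (cosetGraph C).dist a b ≠ 0 := by omega
    obtain ⟨p, hp⟩ := (Reachable.of_dist_ne_zero hab).exists_walk_length_eq_dist
    obtain ⟨v, rfl, hv⟩ := cosetGraph_exists_eq_add_mk_of_walk p
    rw [cosetGraph_dist_add_mk hd a (by omega)] at h
    exact ⟨v, h, rfl⟩
  · rintro ⟨v, hv, rfl⟩
    exact (cosetGraph_dist_add_mk hd a (by omega)).trans hv

theorem dist2_cosetGraph_adj_add_mk_iff (hd : MinDistAtLeast C 7) (a : (Fin n → ZMod 2) ⧸ C)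
    {u w : Fin n → ZMod 2} (hu : hammingNorm u ≤ 2) (hw : hammingNorm w ≤ 2) :
    (dist2 (cosetGraph C)).Adj (a + mk u) (a + mk w) ↔ hammingDist u w = 2 := by
  rw [dist2_cosetGraph_adj_iff hd (by norm_num)]
  constructor
  · rintro ⟨v, hv, h⟩
    rw [add_assoc, ← Submodule.Quotient.mk_add] at h
    obtain rfl : w = u + v := hd.eq_of_mk_eq (add_left_cancel h) <| by
      have := hammingDist_le_hammingNorm_add w (u + v)
      have := hammingNorm_add_le u v
      omega
    rw [hammingDist_eq_hammingNorm, neg_add_cancel_left, hv]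
  · intro h
    refine ⟨-u + w, by rwa [← hammingDist_eq_hammingNorm], ?_⟩
    rw [add_assoc, ← Submodule.Quotient.mk_add, add_neg_cancel_left]

end cosetGraph

theorem locally_triangular_general {n : ℕ}
    (C : Submodule (ZMod 2) (Fin n → ZMod 2)) (hd : MinDistAtLeast C 7)
    (x : Fin n → ZMod 2) :
    ∃ φ : triangularGraph n ≃g
        (dist2 (cosetGraph C)).induce
          ((dist2 (cosetGraph C)).neighborSet (Submodule.Quotient.mk x)),
      ∀ (s : {s : Finset (Fin n) // s.card = 2}) (i j : Fin n), i ≠ j →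
        s.1 = {i, j} →
          (φ s : (Fin n → ZMod 2) ⧸ C) =
            Submodule.Quotient.mk (x + fun k => if k = i ∨ k = j then 1 else 0) := by
  let f (s : {s : Finset (Fin n) // #s = 2}) :
      (dist2 (cosetGraph C)).neighborSet (Submodule.Quotient.mk x) :=
    ⟨_, (dist2_cosetGraph_adj_iff hd (by norm_num)).mpr
      ⟨indicatorVec s.1, (hammingNorm_indicatorVec s.1).trans s.2, rfl⟩⟩
  have hf_inj : Function.Injective f := fun s t hst =>
    Subtype.ext <| indicatorVec_injective <|
      hd.eq_of_mk_eq (add_left_cancel (congrArg Subtype.val hst)) <| by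
        have := hammingDist_le_hammingNorm_add (indicatorVec s.1) (indicatorVec t.1)
        rw [hammingNorm_indicatorVec, hammingNorm_indicatorVec, s.2, t.2] at this
        omega
  have hf_surj : Function.Surjective f := by
    rintro ⟨b, hb⟩
    obtain ⟨v, hv, rfl⟩ := (dist2_cosetGraph_adj_iff hd (by norm_num)).mp hb
    refine ⟨⟨({k | v k ≠ 0} : Finset (Fin n)), hv⟩, Subtype.ext ?_⟩
    simp only [f, indicatorVec_filter_ne_zero]
  refine ⟨⟨Equiv.ofBijective f ⟨hf_inj, hf_surj⟩, fun {s t} => ?_⟩,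
    fun s i j _ hs => ?_⟩
  · have hs_wt := ((hammingNorm_indicatorVec s.1).trans s.2).le
    have ht_wt := ((hammingNorm_indicatorVec t.1).trans t.2).le
    exact (dist2_cosetGraph_adj_add_mk_iff hd _ hs_wt ht_wt).trans triangularGraph_adj_iff.symm
  · change Submodule.Quotient.mk x + Submodule.Quotient.mk (indicatorVec s.1) = _
    rw [← Submodule.Quotient.mk_add, hs]
    congr 2
    funext k
    simp [indicatorVec]

/-- If `C ≤ 𝔽₂ⁿ` has minimum distance at least 7 and `n ≥ 2`, then the subgraph
induced on the neighborhood of any vertex `x + C` of the distance-2 graph of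
`Γ(C)` is isomorphic to the triangular graph `Tₙ`, via `{i,j} ↦ x + e_{i,j} + C`. -/
theorem locally_triangular {n : ℕ} (hn : 2 ≤ n)
    (C : Submodule (ZMod 2) (Fin n → ZMod 2)) (hd : MinDistAtLeast C 7)
    (x : Fin n → ZMod 2) :
    ∃ φ : triangularGraph n ≃g
        (dist2 (cosetGraph C)).induce
          ((dist2 (cosetGraph C)).neighborSet (Submodule.Quotient.mk x)),
      ∀ (s : {s : Finset (Fin n) // s.card = 2}) (i j : Fin n), i ≠ j →
        s.1 = {i, j} →
          (φ s : (Fin n → ZMod 2) ⧸ C) =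
            Submodule.Quotient.mk (x + fun k => if k = i ∨ k = j then 1 else 0) :=
  locally_triangular_general C hd x
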